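/- arXiv:1908.09733 — 2 statements merged into one kernel-verified Lean document; each statement's English description precedes it below -/
import Mathlib

section
/- If C^• is a bounded cochain complex of flat A-modules with H^q(C^•) = 0 for all q > i, and B is any A-algebra (or A-module), then the natural map H^i(C^•) ⊗_A B → H^i(C^• ⊗_A B) is an isomorphism. -/
open TensorProduct

section Aux

variable {A : Type} [CommRing A]

lemma myflat_of_subsingleton (M : Type) [AddCommGroup M] [Module A M] [Subsingleton M] :
    Module.Flat A M := by
  rw [Module.Flat.iff_rTensor_injective']
  intro I
  exact Function.injective_of_subsingleton _

/-- Purity: if `M/K` is flat, then `K ⊗ B → M ⊗ B` is injective for every `B`. -/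
lemma mypure_inj {M : Type} [AddCommGroup M] [Module A M] (K : Submodule A M)
    (hQ : Module.Flat A (M ⧸ K)) (B : Type) [AddCommGroup B] [Module A B] :
    Function.Injective (LinearMap.rTensor B K.subtype) := by
  rw [injective_iff_map_eq_zero]
  intro x hx
  set p : (B →₀ A) →ₗ[A] B := Finsupp.linearCombination A _root_.id with hpdef
  have hp : Function.Surjective p := Finsupp.linearCombination_id_surjective A B
  set S := LinearMap.ker p with hSdef
  have hSp : Function.Exact S.subtype p := LinearMap.exact_subtype_ker_map p
  obtain ⟨y, hy⟩ := LinearMap.lTensor_surjective K hp x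
  have h1 : LinearMap.lTensor M p (LinearMap.rTensor (B →₀ A) K.subtype y) = 0 := by
    rw [← LinearMap.comp_apply, LinearMap.lTensor_comp_rTensor,
      ← LinearMap.rTensor_comp_lTensor, LinearMap.comp_apply, hy, hx]
  obtain ⟨z, hz⟩ := (@lTensor_exact A (LinearMap.ker p) (B →₀ A) B _ _ _ _ _ _ _ S.subtype p M _ _ hSp hp _).mp h1
  have h2 : LinearMap.lTensor (M ⧸ K) S.subtype (LinearMap.rTensor S K.mkQ z) = 0 := by
    have hms : K.mkQ.comp K.subtype = 0 := by ext m; simp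
    rw [← LinearMap.comp_apply, LinearMap.lTensor_comp_rTensor,
      ← LinearMap.rTensor_comp_lTensor, LinearMap.comp_apply, hz,
      ← LinearMap.comp_apply, ← LinearMap.rTensor_comp, hms, LinearMap.rTensor_zero,
      LinearMap.zero_apply]
  have h2' : LinearMap.rTensor S K.mkQ z = 0 :=
    Module.Flat.lTensor_preserves_injective_linearMap (M := M ⧸ K) S.subtype
      (Submodule.injective_subtype S) (by rw [h2, map_zero])
  obtain ⟨w, hw⟩ := (@rTensor_exact A K M (M ⧸ K) _ _ _ _ _ _ _ K.subtype K.mkQ S _ _ (LinearMap.exact_subtype_mkQ K)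
      (Submodule.mkQ_surjective K) z).mp h2'
  have h3 : LinearMap.rTensor (B →₀ A) K.subtype (LinearMap.lTensor K S.subtype w)
      = LinearMap.rTensor (B →₀ A) K.subtype y := by
    rw [← LinearMap.comp_apply, LinearMap.rTensor_comp_lTensor,
      ← LinearMap.lTensor_comp_rTensor, LinearMap.comp_apply, hw, hz]
  have h4 : LinearMap.lTensor K S.subtype w = y :=
    Module.Flat.rTensor_preserves_injective_linearMap (M := B →₀ A) K.subtype
      (Submodule.injective_subtype K) h3
  have hps : p.comp S.subtype = 0 := by ext s; simpa using s.2
  rw [← hy, ← h4, ← LinearMap.comp_apply, ← LinearMap.lTensor_comp, hps,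
    LinearMap.lTensor_zero, LinearMap.zero_apply]

/-- In a short exact sequence `0 → K → M → M/K → 0` with `M` and `M/K` flat, `K` is flat. -/
lemma myflat_ker {M : Type} [AddCommGroup M] [Module A M] (K : Submodule A M)
    (hM : Module.Flat A M) (hQ : Module.Flat A (M ⧸ K)) : Module.Flat A K := by
  rw [Module.Flat.iff_rTensor_injective']
  intro I
  rw [injective_iff_map_eq_zero]
  intro x hx
  have h1 : LinearMap.rTensor M I.subtype (LinearMap.lTensor I K.subtype x) = 0 := by
    rw [← LinearMap.comp_apply, LinearMap.rTensor_comp_lTensor,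
      ← LinearMap.lTensor_comp_rTensor, LinearMap.comp_apply, hx, map_zero]
  have h2 : LinearMap.lTensor I K.subtype x = 0 :=
    (Module.Flat.iff_rTensor_injective').mp hM I (by rw [h1, map_zero])
  have h3 : Function.Injective (LinearMap.lTensor I K.subtype) :=
    (LinearMap.lTensor_inj_iff_rTensor_inj _ _).mpr (mypure_inj K hQ I)
  exact h3 (by rw [h2, map_zero])

end Aux

/-- For a linear map `f : M → N` and a module `B`, the element `x ⊗ b` of
`ker (f ⊗ id_B)` determined by `x ∈ ker f` and `b ∈ B`. -/
noncomputable def kerTensorElt {A M N B : Type} [CommRing A]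
    [AddCommGroup M] [Module A M] [AddCommGroup N] [Module A N]
    [AddCommGroup B] [Module A B]
    (f : M →ₗ[A] N) (x : LinearMap.ker f) (b : B) :
    LinearMap.ker (LinearMap.rTensor B f) :=
  ⟨(x : M) ⊗ₜ[A] b, by
    rw [LinearMap.mem_ker, LinearMap.rTensor_tmul, LinearMap.mem_ker.mp x.2,
      TensorProduct.zero_tmul]⟩

set_option maxHeartbeats 1000000 in
/-- If `C^•` is a bounded cochain complex of flat `A`-modules with
`H^q(C^•) = 0` for all `q > i`, and `B` is any `A`-module, then the natural map
`H^i(C^•) ⊗_A B → H^i(C^• ⊗_A B)` (induced by `x ⊗ b ↦ x ⊗ b` on cocycles) is an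
isomorphism.

We index the complex `0 → C^0 → ⋯ → C^n → 0` so that the zero module on the left sits in
degree `0` (hypothesis `hzero`) and `C^q` sits in degree `q + 1`; thus every degree has a
predecessor, and `H^i(C^•) = ker(d^{i+1})/im(d^i)` with the indexing below. -/
theorem stmt1 {A : Type} [CommRing A] (B : Type) [AddCommGroup B] [Module A B]
    (n : ℕ) (C : ℕ → Type) [∀ q, AddCommGroup (C q)] [∀ q, Module A (C q)]
    (d : ∀ q, C q →ₗ[A] C (q + 1))
    (hcomplex : ∀ q, (d (q + 1)).comp (d q) = 0)
    (hflat : ∀ q, Module.Flat A (C q))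
    (hzero : Subsingleton (C 0))
    (hbounded : ∀ q, n < q → Subsingleton (C q))
    (i : ℕ)
    (hvanish : ∀ q, i < q → LinearMap.ker (d (q + 1)) ≤ LinearMap.range (d q)) :
    ∃ e : ((LinearMap.ker (d (i + 1)) ⧸
            (LinearMap.range (d i)).comap (LinearMap.ker (d (i + 1))).subtype) ⊗[A] B) ≃ₗ[A]
          (LinearMap.ker (LinearMap.rTensor B (d (i + 1))) ⧸
            (LinearMap.range (LinearMap.rTensor B (d i))).comap
              (LinearMap.ker (LinearMap.rTensor B (d (i + 1)))).subtype),
      ∀ (x : LinearMap.ker (d (i + 1))) (b : B),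
        e (Submodule.Quotient.mk x ⊗ₜ[A] b) =
          Submodule.Quotient.mk (kerTensorElt (d (i + 1)) x b) := by
  classical
  have hdd : ∀ q (c : C q), d (q + 1) (d q c) = 0 := by
    intro q c
    have := LinearMap.ext_iff.mp (hcomplex q) c
    simpa using this
  have hrangeq : ∀ q, i < q → LinearMap.range (d q) = LinearMap.ker (d (q + 1)) := by
    intro q hq
    refine le_antisymm ?_ (hvanish q hq)
    rintro _ ⟨c, rfl⟩
    exact LinearMap.mem_ker.mpr (hdd q c)
  have keyflat0 : ∀ k q, i + 1 ≤ q → n + 1 ≤ q + k → Module.Flat A (LinearMap.ker (d q)) := by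
    intro k
    induction k with
    | zero =>
      intro q hq hn
      haveI : Subsingleton (C q) := hbounded q (by omega)
      exact myflat_of_subsingleton _
    | succ k ih =>
      intro q hq hn
      by_cases h : n + 1 ≤ q + k
      · exact ih q hq h
      · haveI hK1 : Module.Flat A (LinearMap.ker (d (q + 1))) := ih (q + 1) (by omega) (by omega)
        refine myflat_ker _ (hflat q) ?_
        exact Module.Flat.of_linearEquiv
          ((d q).quotKerEquivRange.trans (LinearEquiv.ofEq _ _ (hrangeq q (by omega))))
  have keyflat : ∀ q, i + 1 ≤ q → Module.Flat A (LinearMap.ker (d q)) :=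
    fun q hq => keyflat0 (n + 1) q hq (by omega)
  have hquotflat : ∀ q, i < q → Module.Flat A (C q ⧸ LinearMap.ker (d q)) := by
    intro q hq
    haveI := keyflat (q + 1) (by omega)
    exact Module.Flat.of_linearEquiv
      ((d q).quotKerEquivRange.trans (LinearEquiv.ofEq _ _ (hrangeq q hq)))
  set Z := LinearMap.ker (d (i + 1)) with hZ
  set K0 := (LinearMap.range (d i)).comap Z.subtype with hK0def
  set K2 := LinearMap.ker (d (i + 2)) with hK2
  have jinj : Function.Injective (LinearMap.rTensor B Z.subtype) :=
    mypure_inj Z (hquotflat (i + 1) (by omega)) B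
  have kinj : Function.Injective (LinearMap.rTensor B K2.subtype) :=
    mypure_inj K2 (hquotflat (i + 2) (by omega)) B
  set π : C (i + 1) →ₗ[A] K2 := (d (i + 1)).codRestrict K2 (fun c => hdd (i + 1) c) with hπ
  have hπsurj : Function.Surjective π := by
    rintro ⟨x, hx⟩
    obtain ⟨c, hc⟩ := hvanish (i + 1) (by omega) hx
    exact ⟨c, Subtype.ext hc⟩
  have hπexact : Function.Exact Z.subtype π := by
    rw [LinearMap.exact_iff]; refine (LinearMap.ker_codRestrict _ _ _).trans ?_
    exact (Submodule.range_subtype Z).symm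
  have hcompπ : K2.subtype.comp π = d (i + 1) :=
    LinearMap.subtype_comp_codRestrict _ _ _
  have hkerrange : LinearMap.ker (LinearMap.rTensor B (d (i + 1)))
      = LinearMap.range (LinearMap.rTensor B Z.subtype) := by
    have h1 : LinearMap.ker (LinearMap.rTensor B (d (i + 1)))
        = LinearMap.ker (LinearMap.rTensor B π) := by
      rw [← hcompπ, LinearMap.rTensor_comp]
      exact LinearMap.ker_comp_of_ker_eq_bot _ (LinearMap.ker_eq_bot.mpr kinj)
    rw [h1, ← LinearMap.exact_iff]
    exact @rTensor_exact A Z (C (i + 1)) K2 _ _ _ _ _ _ _ Z.subtype π B _ _ hπexact hπsurj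
  set j : Z ⊗[A] B →ₗ[A] LinearMap.ker (LinearMap.rTensor B (d (i + 1))) :=
    (LinearMap.rTensor B Z.subtype).codRestrict _
      (fun x => hkerrange ▸ LinearMap.mem_range_self _ x) with hj
  set N2 := (LinearMap.range (LinearMap.rTensor B (d i))).comap
      (LinearMap.ker (LinearMap.rTensor B (d (i + 1)))).subtype with hN2
  set qm := N2.mkQ.comp j with hqm
  have hjsurj : Function.Surjective j := by
    rintro ⟨c, hc⟩
    rw [hkerrange] at hc
    obtain ⟨x, hx⟩ := hc
    exact ⟨x, Subtype.ext hx⟩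
  have hqsurj : Function.Surjective qm :=
    (Submodule.mkQ_surjective N2).comp hjsurj
  set δ : C i →ₗ[A] Z := (d i).codRestrict Z (fun c => hdd i c) with hδ
  have hδcomp : Z.subtype.comp δ = d i := LinearMap.subtype_comp_codRestrict _ _ _
  have hδK0 : ∀ c, δ c ∈ K0 := fun c => by
    simp only [hK0def, Submodule.mem_comap]
    exact ⟨c, rfl⟩
  set δ₂ : C i →ₗ[A] K0 := δ.codRestrict K0 hδK0 with hδ₂
  have hδ₂comp : K0.subtype.comp δ₂ = δ := LinearMap.subtype_comp_codRestrict _ _ _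
  have hδ₂surj : Function.Surjective δ₂ := by
    rintro ⟨z, hz⟩
    obtain ⟨c, hc⟩ := hz
    exact ⟨c, Subtype.ext (Subtype.ext hc)⟩
  have hkerq : LinearMap.ker qm = LinearMap.range (LinearMap.rTensor B K0.subtype) := by
    have hr : LinearMap.range (LinearMap.rTensor B K0.subtype)
        = LinearMap.range (LinearMap.rTensor B δ) := by
      rw [← hδ₂comp, LinearMap.rTensor_comp]
      exact (LinearMap.range_comp_of_range_eq_top _ (LinearMap.range_eq_top.mpr
        (LinearMap.rTensor_surjective B hδ₂surj))).symm
    rw [hr]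
    ext x
    constructor
    · intro hx
      have hmem : (j x : C (i + 1) ⊗[A] B) ∈ LinearMap.range (LinearMap.rTensor B (d i)) := by
        have := (Submodule.Quotient.mk_eq_zero N2).mp (LinearMap.mem_ker.mp hx)
        simpa [hN2, Submodule.mem_comap] using this
      obtain ⟨t, ht⟩ := hmem
      refine ⟨t, ?_⟩
      apply jinj
      have h1 : LinearMap.rTensor B Z.subtype (LinearMap.rTensor B δ t)
          = LinearMap.rTensor B (d i) t := by
        rw [← LinearMap.comp_apply, ← LinearMap.rTensor_comp, hδcomp]
      rw [h1, ht]
      rfl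
    · rintro ⟨t, rfl⟩
      rw [LinearMap.mem_ker, hqm, LinearMap.comp_apply]
      rw [Submodule.mkQ_apply, Submodule.Quotient.mk_eq_zero]
      have hval : (j (LinearMap.rTensor B δ t) : C (i + 1) ⊗[A] B)
          = LinearMap.rTensor B (d i) t := by
        show LinearMap.rTensor B Z.subtype (LinearMap.rTensor B δ t) = _
        rw [← LinearMap.comp_apply, ← LinearMap.rTensor_comp, hδcomp]
      simp only [hN2, Submodule.mem_comap, Submodule.coe_subtype]
      exact hval ▸ LinearMap.mem_range_self _ t
  set g : Z ⊗[A] B →ₗ[A] (Z ⧸ K0) ⊗[A] B := LinearMap.rTensor B K0.mkQ with hg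
  have hgsurj : Function.Surjective g :=
    LinearMap.rTensor_surjective B (Submodule.mkQ_surjective K0)
  have hkerg : LinearMap.ker g = LinearMap.range (LinearMap.rTensor B K0.subtype) :=
    rTensor_mkQ B K0
  have hker : LinearMap.ker g = LinearMap.ker qm := by rw [hkerg, hkerq]
  refine ⟨(g.quotKerEquivOfSurjective hgsurj).symm.trans
    ((Submodule.quotEquivOfEq _ _ hker).trans (qm.quotKerEquivOfSurjective hqsurj)), ?_⟩
  intro x b
  have h1 : (g.quotKerEquivOfSurjective hgsurj) (Submodule.Quotient.mk (x ⊗ₜ[A] b))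
      = Submodule.Quotient.mk x ⊗ₜ[A] b := by
    simp [LinearMap.quotKerEquivOfSurjective, hg]
  rw [LinearEquiv.trans_apply, LinearEquiv.trans_apply]
  rw [← h1, LinearEquiv.symm_apply_apply, Submodule.quotEquivOfEq_mk]
  have h2 : (qm.quotKerEquivOfSurjective hqsurj) (Submodule.Quotient.mk (x ⊗ₜ[A] b))
      = qm (x ⊗ₜ[A] b) := by
    simp [LinearMap.quotKerEquivOfSurjective]
  rw [h2]
  show N2.mkQ (j (x ⊗ₜ[A] b)) = _
  rw [Submodule.mkQ_apply]
  congr 1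
end

section
/- If C^• is a bounded cochain complex of flat A-modules with H^q(C^•) = 0 for all q > 0, then H^0(C^•) is a flat A-module. -/
open LinearMap TensorProduct

section Aux

variable {R : Type} [CommRing R] {N M P : Type} [AddCommGroup N] [AddCommGroup M]
  [AddCommGroup P] [Module R N] [Module R M] [Module R P]

set_option maxHeartbeats 1000000 in
/-- If `0 → N → M → P → 0` is exact with `P` flat, then tensoring the injection `N → M`
with any module `X` preserves injectivity (i.e. `Tor₁(X, P) = 0`). -/
lemma lTensor_injective_of_flat_quotient
    {ι : N →ₗ[R] M} {π : M →ₗ[R] P}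
    (hinj : Function.Injective ι)
    (hexact : Function.Exact ι π) (hsurj : Function.Surjective π)
    [Module.Flat R P] (X : Type) [AddCommGroup X] [Module R X] :
    Function.Injective (ι.lTensor X) := by
  -- choose a free presentation of `X`
  let p : (X →₀ R) →ₗ[R] X := Finsupp.linearCombination R (id : X → X)
  have hp : Function.Surjective p := Finsupp.linearCombination_surjective R Function.surjective_id
  have h1 : Function.Exact (LinearMap.ker p).subtype p := LinearMap.exact_subtype_ker_map p
  have h2 : Function.Injective (((LinearMap.ker p).subtype).rTensor P) :=
    Module.Flat.rTensor_preserves_injective_linearMap _ (Submodule.injective_subtype _)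
  have h3 : Function.Injective (ι.lTensor (X →₀ R)) :=
    Module.Flat.lTensor_preserves_injective_linearMap _ hinj
  exact lTensor_injective_of_exact_of_exact_of_rTensor_injective (M₁ := LinearMap.ker p)
    (M₂ := X →₀ R) (M₃ := X) (N₁ := N) (N₂ := M) (N₃ := P) h1 hp hexact hsurj h2 h3

lemma flat_of_exact {ι : N →ₗ[R] M} {π : M →ₗ[R] P}
    (hinj : Function.Injective ι)
    (hexact : Function.Exact ι π) (hsurj : Function.Surjective π)
    [Module.Flat R M] [Module.Flat R P] :
    Module.Flat R N := by
  rw [Module.Flat.iff_rTensor_injective']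
  intro I
  have h1 : Function.Injective (ι.lTensor I) :=
    lTensor_injective_of_flat_quotient hinj hexact hsurj I
  have h2 : Function.Injective (rTensor M I.subtype) :=
    (Module.Flat.iff_rTensor_injective' (R := R) (M := M)).mp inferInstance I
  have hcomm : (rTensor M I.subtype).comp (ι.lTensor I)
      = (ι.lTensor R).comp (rTensor N I.subtype) := by
    rw [LinearMap.rTensor_comp_lTensor, LinearMap.lTensor_comp_rTensor]
  have : Function.Injective ((ι.lTensor R).comp (rTensor N I.subtype)) := by
    rw [← hcomm]; exact h2.comp h1
  exact Function.Injective.of_comp this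

end Aux

/-- If `C^•` is a bounded cochain complex of flat `A`-modules with
`H^q(C^•) = 0` for all `q > 0`, then `H^0(C^•) = ker (d^0)` is a flat `A`-module. -/
theorem stmt2 {A : Type} [CommRing A] (n : ℕ) (C : ℕ → Type)
    [∀ i, AddCommGroup (C i)] [∀ i, Module A (C i)]
    (d : ∀ i, C i →ₗ[A] C (i + 1))
    (hcomplex : ∀ i, (d (i + 1)).comp (d i) = 0)
    (hflat : ∀ i, Module.Flat A (C i))
    (hbounded : ∀ i, n < i → Subsingleton (C i))
    (hexact : ∀ i, LinearMap.ker (d (i + 1)) ≤ LinearMap.range (d i)) :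
    Module.Flat A (LinearMap.ker (d 0)) := by
  -- step lemma: flatness descends
  have step : ∀ i, Module.Flat A (LinearMap.ker (d (i + 1))) →
      Module.Flat A (LinearMap.ker (d i)) := by
    intro i hZ
    haveI := hflat i
    haveI := hZ
    -- the map `π : C i → ker (d (i+1))` induced by `d i`
    have hmem : ∀ x : C i, d i x ∈ LinearMap.ker (d (i + 1)) := by
      intro x
      have := congrArg (fun f => f x) (hcomplex i)
      simpa [LinearMap.mem_ker] using this
    let π : C i →ₗ[A] LinearMap.ker (d (i + 1)) := (d i).codRestrict _ hmem
    have hsurj : Function.Surjective π := by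
      rintro ⟨y, hy⟩
      obtain ⟨x, hx⟩ := hexact i hy
      exact ⟨x, Subtype.ext hx⟩
    have hex : Function.Exact (LinearMap.ker (d i)).subtype π := by
      rw [LinearMap.exact_iff]
      ext x
      simp [π, LinearMap.mem_ker, LinearMap.codRestrict, Submodule.range_subtype]
    exact flat_of_exact (Submodule.injective_subtype _) hex hsurj
  -- downward induction
  have key : ∀ j : ℕ, Module.Flat A (LinearMap.ker (d (n + 1 - j))) := by
    intro j
    induction j with
    | zero =>
        haveI : Subsingleton (C (n + 1)) := hbounded _ (Nat.lt_succ_self n)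
        simp only [Nat.sub_zero]
        infer_instance
    | succ j ih =>
        rcases le_or_gt (j + 1) (n + 1) with h | h
        · have : n + 1 - j = (n + 1 - (j + 1)) + 1 := by omega
          rw [this] at ih
          exact step _ ih
        · have : n + 1 - (j + 1) = n + 1 - j := by omega
          rw [this]
          exact ih
  have := key (n + 1)
  have e : n + 1 - (n + 1) = 0 := Nat.sub_self _
  rw [e] at this
  exact this
end
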